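/- (Uniform upper bound on the stream function away from the boundary.) Let ζ be a nonnegative measurable function on the upper half-plane Π with ∫_Π ζ = κ < ∞, and let Gζ(x) = (1/(2π)) ∫_Π ln(|x − ȳ|/|x − y|) ζ(y) dy. Then for every x = (x₁,x₂) ∈ Π with x₂ ≥ 1: Gζ(x) ≤ (κ/(2π)) ln 3 + (κ/(2π)) ln(3x₂) + (1/(2π)) ∫_Π ln⁺(1/|x − y|) ζ(y) dy, where ln⁺(t) = max(ln t, 0). -/

import Mathlib

open Real MeasureTheory

/-- The open upper half-plane. -/
def upperHalfPlane2 : Set (EuclideanSpace ℝ (Fin 2)) := {x | 0 < x 1}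

/-- The reflection `ȳ = (y₁, -y₂)` across the horizontal axis. -/
noncomputable def reflect (y : EuclideanSpace ℝ (Fin 2)) : EuclideanSpace ℝ (Fin 2) :=
  WithLp.toLp 2 ![y 0, -(y 1)]

/-- The half-plane stream function `Gζ(x) = (1/(2π)) ∫_Π ln(|x-ȳ|/|x-y|) ζ(y) dy`. -/
noncomputable def streamG (ζ : EuclideanSpace ℝ (Fin 2) → ℝ)
    (x : EuclideanSpace ℝ (Fin 2)) : ℝ :=
  (1 / (2 * π)) * ∫ y in upperHalfPlane2, Real.log (‖x - reflect y‖ / ‖x - y‖) * ζ y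

/-
Write `a = |x - ȳ|` and `b = |x - y|`. Since `a² = b² + 4 x₂ y₂`, one has `b ≤ a ≤ b + 2 x₂`.
If `b ≥ x₂` then `a / b ≤ 3`; otherwise `a ≤ 3 x₂` and `-ln b ≤ ln⁺ (1/b)`. Either way the kernel
`ln (a / b)` is at most `ln 3 + ln (3 x₂) + ln⁺ (1/b)`, and integrating against `ζ ≥ 0` gives the
bound. Because `a ≥ x₂ ≥ 1` the kernel also dominates `ln⁺ (1/b)`, so the two integrals are
integrable together; when they are not, the Bochner integral of the kernel is `0` and the bound
is trivial.
-/

namespace Real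

lemma log_div_le_log_three_add {a b t : ℝ} (ha : 0 < a) (hb : 0 ≤ b) (ht : 1 ≤ 3 * t)
    (hab : a ≤ b + 2 * t) :
    log (a / b) ≤ log 3 + log (3 * t) + max (log (1 / b)) 0 := by
  have hlog3 : 0 ≤ log 3 := log_nonneg (by norm_num)
  have hlog3t : 0 ≤ log (3 * t) := log_nonneg ht
  have hmax : 0 ≤ max (log (1 / b)) 0 := le_max_right _ _
  rcases hb.eq_or_lt with rfl | hb
  · rw [div_zero, div_zero, log_zero, max_self]
    linarith
  rcases le_total t b with htb | hbt
  · have : log (a / b) ≤ log 3 :=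
      log_le_log (div_pos ha hb) ((div_le_iff₀ hb).2 (by linarith))
    linarith
  · have hlog_a : log a ≤ log (3 * t) := log_le_log ha (by linarith)
    have hlog_b : -log b ≤ max (log (1 / b)) 0 := by
      rw [one_div, log_inv]
      exact le_max_left _ _
    rw [log_div ha.ne' hb.ne']
    linarith

lemma max_log_one_div_le_log_div {a b : ℝ} (ha : 1 ≤ a) (hb : 0 ≤ b) (hba : b ≤ a) :
    max (log (1 / b)) 0 ≤ log (a / b) := by
  rcases hb.eq_or_lt with rfl | hb
  · simp
  have ha0 : 0 < a := by linarith
  have hlog_ba : log b ≤ log a := log_le_log hb hba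
  rw [one_div, log_inv, log_div ha0.ne' hb.ne']
  exact max_le (by linarith [log_nonneg ha]) (by linarith)

end Real

@[simp] lemma reflect_apply_zero (y : EuclideanSpace ℝ (Fin 2)) : reflect y 0 = y 0 := rfl

@[simp] lemma reflect_apply_one (y : EuclideanSpace ℝ (Fin 2)) : reflect y 1 = -y 1 := rfl

lemma EuclideanSpace.norm_sq_fin_two (z : EuclideanSpace ℝ (Fin 2)) :
    ‖z‖ ^ 2 = z 0 ^ 2 + z 1 ^ 2 := by
  simp [EuclideanSpace.norm_sq_eq, Fin.sum_univ_two]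

lemma norm_sub_reflect_sq (x y : EuclideanSpace ℝ (Fin 2)) :
    ‖x - reflect y‖ ^ 2 = ‖x - y‖ ^ 2 + 4 * x 1 * y 1 := by
  rw [EuclideanSpace.norm_sq_fin_two, EuclideanSpace.norm_sq_fin_two]
  simp only [PiLp.sub_apply, reflect_apply_zero, reflect_apply_one]
  ring

lemma norm_sub_le_norm_sub_reflect {x y : EuclideanSpace ℝ (Fin 2)} (h : 0 ≤ x 1 * y 1) :
    ‖x - y‖ ≤ ‖x - reflect y‖ := by
  refine (sq_le_sq₀ (norm_nonneg _) (norm_nonneg _)).1 ?_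
  rw [norm_sub_reflect_sq]
  linarith

lemma le_norm_sub_reflect {x y : EuclideanSpace ℝ (Fin 2)} (hx : 0 ≤ x 1) (hy : 0 ≤ y 1) :
    x 1 ≤ ‖x - reflect y‖ := by
  refine le_trans ?_ (PiLp.norm_apply_le (x - reflect y) 1)
  rw [PiLp.sub_apply, reflect_apply_one, Real.norm_eq_abs, abs_of_nonneg (by linarith)]
  linarith

lemma norm_sub_reflect_le {x y : EuclideanSpace ℝ (Fin 2)} (hx : 0 ≤ x 1) :
    ‖x - reflect y‖ ≤ ‖x - y‖ + 2 * x 1 := by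
  have hy_sub : y 1 - x 1 ≤ ‖x - y‖ := by
    have := PiLp.norm_apply_le (x - y) 1
    simp only [PiLp.sub_apply, Real.norm_eq_abs] at this
    linarith [neg_abs_le (x 1 - y 1)]
  refine (sq_le_sq₀ (norm_nonneg _) (by positivity)).1 ?_
  rw [norm_sub_reflect_sq]
  nlinarith

lemma measurableSet_upperHalfPlane2 : MeasurableSet upperHalfPlane2 :=
  measurableSet_lt measurable_const (by fun_prop)

lemma max_log_one_div_le_log_div_norm_sub_reflect {x y : EuclideanSpace ℝ (Fin 2)}
    (hx : 1 ≤ x 1) (hy : 0 ≤ y 1) :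
    max (log (1 / ‖x - y‖)) 0 ≤ log (‖x - reflect y‖ / ‖x - y‖) :=
  max_log_one_div_le_log_div (hx.trans (le_norm_sub_reflect (by linarith) hy)) (norm_nonneg _)
    (norm_sub_le_norm_sub_reflect (mul_nonneg (by linarith) hy))

lemma log_div_norm_sub_reflect_le {x y : EuclideanSpace ℝ (Fin 2)} (hx : 1 ≤ 3 * x 1)
    (hy : 0 ≤ y 1) :
    log (‖x - reflect y‖ / ‖x - y‖) ≤ log 3 + log (3 * x 1) + max (log (1 / ‖x - y‖)) 0 :=
  log_div_le_log_three_add ((by linarith : (0 : ℝ) < x 1).trans_le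
      (le_norm_sub_reflect (by linarith) hy))
    (norm_nonneg _) hx (norm_sub_reflect_le (by linarith))

namespace MeasureTheory

variable {α : Type*} [MeasurableSpace α] {μ : Measure α} {s : Set α}

lemma setIntegral_mul_le_const_mul_add {f g ζ : α → ℝ} {C : ℝ} (hs : MeasurableSet s)
    (hC : 0 ≤ C) (hζ0 : ∀ y ∈ s, 0 ≤ ζ y) (hζ : IntegrableOn ζ s μ)
    (hf : AEStronglyMeasurable f (μ.restrict s)) (hf0 : ∀ y ∈ s, 0 ≤ f y)
    (hfg : ∀ y ∈ s, f y ≤ g y) (hgf : ∀ y ∈ s, g y ≤ C + f y) :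
    ∫ y in s, g y * ζ y ∂μ ≤ C * ∫ y in s, ζ y ∂μ + ∫ y in s, f y * ζ y ∂μ := by
  have hfζ0 : ∀ y ∈ s, 0 ≤ f y * ζ y := fun y hy => mul_nonneg (hf0 y hy) (hζ0 y hy)
  by_cases hgζ : IntegrableOn (fun y => g y * ζ y) s μ
  · have hfζ : IntegrableOn (fun y => f y * ζ y) s μ := by
      refine hgζ.mono' (hf.mul hζ.aestronglyMeasurable) ((ae_restrict_iff' hs).2 ?_)
      refine Filter.Eventually.of_forall fun y hy => ?_
      rw [Real.norm_eq_abs, abs_of_nonneg (hfζ0 y hy)]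
      exact mul_le_mul_of_nonneg_right (hfg y hy) (hζ0 y hy)
    rw [← integral_const_mul, ← integral_add (hζ.const_mul C) hfζ]
    refine setIntegral_mono_on hgζ ((hζ.const_mul C).add hfζ) hs fun y hy => ?_
    have := mul_le_mul_of_nonneg_right (hgf y hy) (hζ0 y hy)
    linarith
  · rw [integral_undef hgζ]
    exact add_nonneg (mul_nonneg hC (setIntegral_nonneg hs hζ0)) (setIntegral_nonneg hs hfζ0)

end MeasureTheory

theorem stream_function_upper_bound_general (ζ : EuclideanSpace ℝ (Fin 2) → ℝ) (κ : ℝ)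
    (hζ0 : ∀ x, 0 ≤ ζ x)
    (hζint : IntegrableOn ζ upperHalfPlane2)
    (hκ : ∫ x in upperHalfPlane2, ζ x = κ)
    (x : EuclideanSpace ℝ (Fin 2)) (hx2 : 1 ≤ x 1) :
    streamG ζ x ≤ (κ / (2 * π)) * Real.log 3 + (κ / (2 * π)) * Real.log (3 * x 1)
      + (1 / (2 * π)) * ∫ y in upperHalfPlane2,
          max (Real.log (1 / ‖x - y‖)) 0 * ζ y := by
  have hC : 0 ≤ log 3 + log (3 * x 1) :=
    add_nonneg (log_nonneg (by norm_num)) (log_nonneg (by linarith))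
  have hkernel := setIntegral_mul_le_const_mul_add measurableSet_upperHalfPlane2 hC
    (fun y _ => hζ0 y) hζint (by fun_prop : Measurable _).aestronglyMeasurable
    (fun y _ => le_max_right _ _)
    (fun y hy => max_log_one_div_le_log_div_norm_sub_reflect hx2 hy.le)
    (fun y hy => log_div_norm_sub_reflect_le (by linarith) hy.le)
  rw [hκ] at hkernel
  calc streamG ζ x
      ≤ 1 / (2 * π) * ((log 3 + log (3 * x 1)) * κ
          + ∫ y in upperHalfPlane2, max (log (1 / ‖x - y‖)) 0 * ζ y) :=
        mul_le_mul_of_nonneg_left hkernel (by positivity)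
    _ = _ := by ring

/-- uniform upper bound on the stream function away from the boundary. -/
theorem stream_function_upper_bound (ζ : EuclideanSpace ℝ (Fin 2) → ℝ) (κ : ℝ)
    (hζ0 : ∀ x, 0 ≤ ζ x)
    (hζint : IntegrableOn ζ upperHalfPlane2)
    (hκ : ∫ x in upperHalfPlane2, ζ x = κ)
    (x : EuclideanSpace ℝ (Fin 2)) (hx : x ∈ upperHalfPlane2) (hx2 : 1 ≤ x 1) :
    streamG ζ x ≤ (κ / (2 * π)) * Real.log 3 + (κ / (2 * π)) * Real.log (3 * x 1)
      + (1 / (2 * π)) * ∫ y in upperHalfPlane2,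
          max (Real.log (1 / ‖x - y‖)) 0 * ζ y :=
  stream_function_upper_bound_general ζ κ hζ0 hζint hκ x hx2
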